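/- arXiv:1302.0715 — 8 statements merged into one kernel-verified Lean document; each statement's English description precedes it below -/
import Mathlib

section
/- Let n ∈ ℕ and (F,σ) ∈ 𝒢ₛ_n, with min(F,σ) and max(F,σ) the values attached by some derivation in the recursive definition. Then there exist τ_m, τ_M ∈ F such that: (i) min(F,σ) = |σ∧τ_m| and max(F,σ) = |σ∧τ_M|; and (ii) for every τ ∈ F, σ∧τ_m ⊑ σ∧τ ⊑ σ∧τ_M. -/
abbrev Cantor : Type := ℕ → Bool

/- `wedgeLen σ τ` is the length `|σ∧τ| ∈ ℕ∞` of the longest common initial segment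
of `σ` and `τ` (`⊤` if `σ = τ`).  Since wedges `σ∧τ`, `σ∧τ'` of a common sequence are
initial segments of that sequence, comparisons `⊑`, `⊏`, `=` between such wedges are
equivalent to `≤`, `<`, `=` between their lengths. -/
open Classical in
noncomputable def wedgeLen (σ τ : Cantor) : ℕ∞ :=
  if h : σ = τ then ⊤ else ((Nat.find (Function.ne_iff.mp h) : ℕ) : ℕ∞)

/-- `GS n F σ m M` : the pair `(F,σ)` belongs to `𝒢ₛ_n` via a derivation attaching the
values `min(F,σ) = m` and `max(F,σ) = M`. -/
inductive GS : ℕ → Finset Cantor → Cantor → ℕ∞ → ℕ∞ → Prop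
  | base (d : ℕ) (τ : Fin (d + 1) → Cantor) (σ : Cantor) (F : Finset Cantor)
      (h1 : ∀ i, σ ≠ τ i)
      (h2 : 0 < wedgeLen σ (τ 0))
      (h3 : ∀ i j : Fin (d + 1), i < j → wedgeLen σ (τ i) < wedgeLen σ (τ j))
      (h4 : ((d + 1 : ℕ) : ℕ∞) ≤ wedgeLen σ (τ 0))
      (hF : ∀ x, x ∈ F ↔ ∃ i, x = τ i) :
      GS 1 F σ (wedgeLen σ (τ 0)) (wedgeLen σ (τ (Fin.last d)))
  | up (n : ℕ) (F : Finset Cantor) (σ : Cantor) (m M : ℕ∞) :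
      GS n F σ m M → GS (n + 1) F σ m M
  | skipped (n : ℕ) (d : ℕ) (Fs : Fin (d + 1) → Finset Cantor)
      (σs : Fin (d + 1) → Cantor) (mins maxs : Fin (d + 1) → ℕ∞)
      (σ : Cantor) (F : Finset Cantor)
      (hGS : ∀ i, GS n (Fs i) (σs i) (mins i) (maxs i))
      (hdisj : ∀ i j : Fin (d + 1), i ≠ j → ∀ x, x ∈ Fs i → x ∉ Fs j)
      (hne : ∀ i, σ ≠ σs i)
      (h0 : 0 < wedgeLen σ (σs 0))
      (hmono : ∀ i j : Fin (d + 1), i < j → wedgeLen σ (σs i) < wedgeLen σ (σs j))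
      (hlt : ∀ i, wedgeLen σ (σs i) < mins i)
      (hd : ((d + 1 : ℕ) : ℕ∞) ≤ wedgeLen σ (σs 0))
      (hF : ∀ x, x ∈ F ↔ ∃ i, x ∈ Fs i) :
      GS (n + 1) F σ (wedgeLen σ (σs 0)) (wedgeLen σ (σs (Fin.last d)))
  | attached (n : ℕ) (d : ℕ) (Fs : Fin (d + 1) → Finset Cantor)
      (mins maxs : Fin (d + 1) → ℕ∞) (σ : Cantor) (F : Finset Cantor)
      (hGS : ∀ i, GS n (Fs i) σ (mins i) (maxs i))
      (hdisj : ∀ i j : Fin (d + 1), i ≠ j → ∀ x, x ∈ Fs i → x ∉ Fs j)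
      (hord : ∀ i : Fin d, maxs i.castSucc < mins i.succ)
      (hd : ((d + 1 : ℕ) : ℕ∞) ≤ mins 0)
      (hF : ∀ x, x ∈ F ↔ ∃ i, x ∈ Fs i) :
      GS (n + 1) F σ (mins 0) (maxs (Fin.last d))

lemma wedge_ne (σ τ : Cantor) (h : σ ≠ τ) :
    wedgeLen σ τ = ((Nat.find (Function.ne_iff.mp h) : ℕ) : ℕ∞) := dif_neg h

lemma agree (σ τ : Cantor) (j : ℕ) (h : (j : ℕ∞) < wedgeLen σ τ) : σ j = τ j := by
  by_cases he : σ = τ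
  · exact congrFun he j
  · rw [wedge_ne σ τ he, Nat.cast_lt] at h
    by_contra hne
    exact absurd (Nat.find_le hne) (not_le.mpr h)

lemma wedge_eq_of_lt (σ ρ τ : Cantor) (h : wedgeLen σ ρ < wedgeLen ρ τ) :
    wedgeLen σ τ = wedgeLen σ ρ := by
  have hσρ : σ ≠ ρ := by
    intro e; subst e; simp [wedgeLen] at h
  set k := Nat.find (Function.ne_iff.mp hσρ) with hkdef
  have hk : σ k ≠ ρ k := Nat.find_spec (Function.ne_iff.mp hσρ)
  have hbelow : ∀ j < k, σ j = ρ j := fun j hj => by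
    by_contra hne; exact absurd (Nat.find_le hne) (not_le.mpr hj)
  rw [wedge_ne σ ρ hσρ, ← hkdef] at h ⊢
  have hρτk : ρ k = τ k := agree ρ τ k h
  have hρτ : ∀ j < k, ρ j = τ j := fun j hj =>
    agree ρ τ j (lt_trans (by exact_mod_cast hj) h)
  have hστ : σ ≠ τ := by
    intro e; exact hk ((congrFun e k).trans hρτk.symm)
  rw [wedge_ne σ τ hστ, Nat.cast_inj]
  refine le_antisymm (Nat.find_le (by rw [← hρτk]; exact hk)) ?_
  refine Nat.le_find_iff _ _ |>.mpr (fun j hj => ?_)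
  simp only [not_not]
  rw [hbelow j hj, hρτ j hj]

theorem GS_aux (n : ℕ) (F : Finset Cantor) (σ : Cantor)
    (m M : ℕ∞) (h : GS n F σ m M) :
    ∃ τm ∈ F, ∃ τM ∈ F, m = wedgeLen σ τm ∧ M = wedgeLen σ τM ∧
      ∀ τ ∈ F, wedgeLen σ τm ≤ wedgeLen σ τ ∧ wedgeLen σ τ ≤ wedgeLen σ τM := by
  induction h with
  | base d τ σ F h1 h2 h3 h4 hF =>
    have mono : ∀ i j : Fin (d+1), i ≤ j → wedgeLen σ (τ i) ≤ wedgeLen σ (τ j) := by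
      intro i j hij
      rcases lt_or_eq_of_le hij with hlt | heq
      · exact (h3 i j hlt).le
      · rw [heq]
    refine ⟨τ 0, (hF _).mpr ⟨0, rfl⟩, τ (Fin.last d), (hF _).mpr ⟨Fin.last d, rfl⟩,
      rfl, rfl, fun x hx => ?_⟩
    obtain ⟨i, rfl⟩ := (hF x).mp hx
    exact ⟨mono 0 i (Fin.zero_le i), mono i (Fin.last d) (Fin.le_last i)⟩
  | up n F σ m M h ih => exact ih
  | skipped n d Fs σs mins maxs σ F hGS hdisj hne h0 hmono hlt hd hF ih =>
    have key : ∀ i, ∀ x ∈ Fs i, wedgeLen σ x = wedgeLen σ (σs i) := by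
      intro i x hx
      obtain ⟨τm, hτm, τM, hτM, hm, hM, hall⟩ := ih i
      have h1 : wedgeLen σ (σs i) < wedgeLen (σs i) x :=
        lt_of_lt_of_le (hlt i) (hm ▸ (hall x hx).1)
      exact wedge_eq_of_lt σ (σs i) x h1
    obtain ⟨τm0, hτm0, _, _, _, _, _⟩ := ih 0
    obtain ⟨τmL, hτmL, _, _, _, _, _⟩ := ih (Fin.last d)
    have mono : ∀ i j : Fin (d+1), i ≤ j → wedgeLen σ (σs i) ≤ wedgeLen σ (σs j) := by
      intro i j hij
      rcases lt_or_eq_of_le hij with hlt' | heq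
      · exact (hmono i j hlt').le
      · rw [heq]
    refine ⟨τm0, (hF _).mpr ⟨0, hτm0⟩, τmL, (hF _).mpr ⟨Fin.last d, hτmL⟩,
      (key 0 τm0 hτm0).symm, (key (Fin.last d) τmL hτmL).symm, fun x hx => ?_⟩
    obtain ⟨i, hi⟩ := (hF x).mp hx
    rw [key 0 τm0 hτm0, key (Fin.last d) τmL hτmL, key i x hi]
    exact ⟨mono 0 i (Fin.zero_le i), mono i (Fin.last d) (Fin.le_last i)⟩
  | attached n d Fs mins maxs σ F hGS hdisj hord hd hF ih =>
    choose τms hτms τMs hτMs hm hM hall using ih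
    have hmm : ∀ i, mins i ≤ maxs i := fun i => by
      rw [hm i, hM i]; exact (hall i (τMs i) (hτMs i)).1
    have minsmono : Monotone mins := by
      apply (Fin.monotone_iff_le_succ).mpr
      intro i
      exact le_trans (hmm i.castSucc) (hord i).le
    have maxsmono : Monotone maxs := by
      apply (Fin.monotone_iff_le_succ).mpr
      intro i
      exact le_trans (hord i).le (hmm i.succ)
    refine ⟨τms 0, (hF _).mpr ⟨0, hτms 0⟩, τMs (Fin.last d),
      (hF _).mpr ⟨Fin.last d, hτMs (Fin.last d)⟩, hm 0, hM (Fin.last d), fun x hx => ?_⟩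
    obtain ⟨i, hi⟩ := (hF x).mp hx
    constructor
    · calc wedgeLen σ (τms 0) = mins 0 := (hm 0).symm
        _ ≤ mins i := minsmono (Fin.zero_le i)
        _ = wedgeLen σ (τms i) := hm i
        _ ≤ wedgeLen σ x := (hall i x hi).1
    · calc wedgeLen σ x ≤ wedgeLen σ (τMs i) := (hall i x hi).2
        _ = maxs i := (hM i).symm
        _ ≤ maxs (Fin.last d) := maxsmono (Fin.le_last i)
        _ = wedgeLen σ (τMs (Fin.last d)) := hM (Fin.last d)

theorem GS_min_max_attained (n : ℕ) (hn : 1 ≤ n) (F : Finset Cantor) (σ : Cantor)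
    (m M : ℕ∞) (h : GS n F σ m M) :
    ∃ τm ∈ F, ∃ τM ∈ F, m = wedgeLen σ τm ∧ M = wedgeLen σ τM ∧
      ∀ τ ∈ F, wedgeLen σ τm ≤ wedgeLen σ τ ∧ wedgeLen σ τ ≤ wedgeLen σ τM := by
  exact GS_aux n F σ m M h
end

section
/- Let n ∈ ℕ and (F,σ) ∈ 𝒢ₛ_n with #F ≥ 2. Then min(F,σ) ≤ min{|τ_1∧τ_2| : τ_1,τ_2 ∈ F with τ_1 ≠ τ_2}. -/
lemma enat_le_of_forall {a b : ℕ∞} (h : ∀ k : ℕ, (k : ℕ∞) ≤ a → (k : ℕ∞) ≤ b) : a ≤ b := by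
  cases a using ENat.recTopCoe with
  | top =>
    cases b using ENat.recTopCoe with
    | top => exact le_rfl
    | coe m =>
      have := h (m + 1) le_top
      exact absurd (Nat.cast_le.mp this) (by omega)
  | coe k => exact h k le_rfl

lemma le_wedgeLen_iff (σ τ : Cantor) (k : ℕ) :
    (k : ℕ∞) ≤ wedgeLen σ τ ↔ ∀ i < k, σ i = τ i := by
  unfold wedgeLen
  split
  · next h => subst h; simp
  · next h =>
    rw [Nat.cast_le, Nat.le_find_iff]
    simp [not_not]

lemma wedge_triangle (σ τ₁ τ₂ : Cantor) :
    min (wedgeLen σ τ₁) (wedgeLen σ τ₂) ≤ wedgeLen τ₁ τ₂ := by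
  apply enat_le_of_forall
  intro k hk
  rw [le_min_iff] at hk
  obtain ⟨h1, h2⟩ := hk
  rw [le_wedgeLen_iff] at h1 h2 ⊢
  intro i hi
  exact (h1 i hi).symm.trans (h2 i hi)

lemma wedgeLen_comm (σ τ : Cantor) : wedgeLen σ τ = wedgeLen τ σ := by
  apply le_antisymm <;>
  · apply enat_le_of_forall
    intro k hk
    rw [le_wedgeLen_iff] at *
    intro i hi
    exact (hk i hi).symm

lemma GS_min_le_max {n : ℕ} {F : Finset Cantor} {σ : Cantor} {m M : ℕ∞}
    (h : GS n F σ m M) : m ≤ M := by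
  induction h with
  | base d τ σ F h1 h2 h3 h4 hF =>
    rcases eq_or_lt_of_le (Fin.zero_le (Fin.last d)) with he | hl
    · rw [← he]
    · exact le_of_lt (h3 0 (Fin.last d) hl)
  | up n F σ m M h ih => exact ih
  | skipped n d Fs σs mins maxs σ F hGS hdisj hne h0 hmono hlt hd hF ih =>
    rcases eq_or_lt_of_le (Fin.zero_le (Fin.last d)) with he | hl
    · rw [← he]
    · exact le_of_lt (hmono 0 (Fin.last d) hl)
  | attached n d Fs mins maxs σ F hGS hdisj hord hd hF ih =>
    have key : ∀ i : Fin (d + 1), mins 0 ≤ maxs i := by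
      intro i
      induction i using Fin.induction with
      | zero => exact ih 0
      | succ j hj => exact hj.trans ((hord j).le.trans (ih j.succ))
    exact key (Fin.last d)

lemma GS_min_le_wedge {n : ℕ} {F : Finset Cantor} {σ : Cantor} {m M : ℕ∞}
    (h : GS n F σ m M) : ∀ τ ∈ F, m ≤ wedgeLen σ τ := by
  induction h with
  | base d τ σ F h1 h2 h3 h4 hF =>
    intro x hx
    obtain ⟨i, rfl⟩ := (hF x).mp hx
    rcases eq_or_lt_of_le (Fin.zero_le i) with he | hl
    · rw [← he]
    · exact le_of_lt (h3 0 i hl)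
  | up n F σ m M h ih => exact ih
  | skipped n d Fs σs mins maxs σ F hGS hdisj hne h0 hmono hlt hd hF ih =>
    intro x hx
    obtain ⟨i, hxi⟩ := (hF x).mp hx
    have h1 : wedgeLen σ (σs 0) ≤ wedgeLen σ (σs i) := by
      rcases eq_or_lt_of_le (Fin.zero_le i) with he | hl
      · rw [← he]
      · exact le_of_lt (hmono 0 i hl)
    have h2 : wedgeLen σ (σs 0) ≤ wedgeLen (σs i) x :=
      h1.trans ((hlt i).le.trans (ih i x hxi))
    have h1' : wedgeLen σ (σs 0) ≤ wedgeLen (σs i) σ := by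
      rw [wedgeLen_comm (σs i) σ]; exact h1
    exact le_trans (le_min h1' h2) (wedge_triangle (σs i) σ x)
  | attached n d Fs mins maxs σ F hGS hdisj hord hd hF ih =>
    intro x hx
    obtain ⟨i, hxi⟩ := (hF x).mp hx
    have key : ∀ j : Fin (d + 1), mins 0 ≤ maxs j := by
      intro j
      induction j using Fin.induction with
      | zero => exact GS_min_le_max (hGS 0)
      | succ j hj => exact hj.trans ((hord j).le.trans (GS_min_le_max (hGS j.succ)))
    have hmins : mins 0 ≤ mins i := by
      induction i using Fin.cases with
      | zero => exact le_rfl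
      | succ j => exact (key j.castSucc).trans (hord j).le
    exact hmins.trans (ih i x hxi)

theorem GS_min_le_pair_wedge (n : ℕ) (hn : 1 ≤ n) (F : Finset Cantor) (σ : Cantor)
    (m M : ℕ∞) (h : GS n F σ m M) (hF : 2 ≤ F.card) :
    ∀ τ₁ ∈ F, ∀ τ₂ ∈ F, τ₁ ≠ τ₂ → m ≤ wedgeLen τ₁ τ₂ := by
  intro τ₁ h₁ τ₂ h₂ hne
  exact le_trans (le_min (GS_min_le_wedge h τ₁ h₁) (GS_min_le_wedge h τ₂ h₂))
    (wedge_triangle σ τ₁ τ₂)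
end

section
/- Let ((F_k,σ_k))_k be a sequence of pairs such that for each k there exists n_k ∈ ℕ with (F_k,σ_k) ∈ 𝒢ₛ_{n_k}, and such that lim_k min(F_k,σ_k) = ∞ (where min(F_k,σ_k) = min{|σ_k∧τ| : τ ∈ F_k}). If F ⊆ 2^ℕ is such that the indicator χ_F is a cluster point of the sequence of indicators (χ_{F_k})_k in the product space {0,1}^{2^ℕ} (in particular, if every finite subset of F is contained in F_k for infinitely many k), then #F ≤ 1. -/
/-- The indicator function of a set of branches, with values in `Bool`. -/
noncomputable def χS (F : Set Cantor) : Cantor → Bool :=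
  fun τ => @ite _ (τ ∈ F) (Classical.propDecidable _) true false

/-! If `τ₁ ≠ τ₂` first differ at level `ℓ`, no `F_k` with `min(F_k,σ_k) > ℓ` contains both, since
every element of such an `F_k` agrees with `σ_k` up to level `ℓ`. But a cluster point `χ_F` forces
every finite subset of `F` into infinitely many `F_k`. -/

open Filter Topology

lemma χS_apply_eq_true {F : Set Cantor} {τ : Cantor} : χS F τ = true ↔ τ ∈ F := by
  simp [χS]

lemma apply_eq_of_lt_wedgeLen {σ τ : Cantor} {ℓ : ℕ} (h : (ℓ : ℕ∞) < wedgeLen σ τ) :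
    σ ℓ = τ ℓ := by
  by_cases hστ : σ = τ
  · rw [hστ]
  · rw [wedgeLen, dif_neg hστ, Nat.cast_lt] at h
    simpa using Nat.find_min (Function.ne_iff.mp hστ) h

lemma apply_eq_of_lt_inf_wedgeLen {G : Finset Cantor} {σ τ : Cantor} {ℓ : ℕ} (hτ : τ ∈ G)
    (h : (ℓ : ℕ∞) < G.inf (wedgeLen σ)) : σ ℓ = τ ℓ :=
  apply_eq_of_lt_wedgeLen (h.trans_le (Finset.inf_le hτ))

lemma MapClusterPt.frequently_subset_of_χS {ι : Type*} {l : Filter ι} {G : ι → Set Cantor}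
    {F : Set Cantor} (hF : MapClusterPt (χS F) l (fun k => χS (G k))) {s : Finset Cantor}
    (hs : ↑s ⊆ F) : ∃ᶠ k in l, ↑s ⊆ G k := by
  have hnhds : (↑s : Set Cantor).pi (fun _ => {true}) ∈ 𝓝 (χS F) :=
    set_pi_mem_nhds s.finite_toSet fun τ hτ =>
      (isOpen_discrete _).mem_nhds (χS_apply_eq_true.mpr (hs hτ))
  refine (mapClusterPt_iff_frequently.mp hF _ hnhds).mono fun k hk τ hτ => ?_
  exact χS_apply_eq_true.mp (hk τ hτ)

theorem cluster_point_subsingleton_general (Fk : ℕ → Finset Cantor) (σk : ℕ → Cantor)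
    (hlim : ∀ N : ℕ, ∃ k₀ : ℕ, ∀ k ≥ k₀, (N : ℕ∞) ≤ (Fk k).inf (wedgeLen (σk k)))
    (F : Set Cantor)
    (hF : MapClusterPt (χS F) Filter.atTop (fun k => χS (↑(Fk k) : Set Cantor))) :
    F.Subsingleton := by
  classical
  intro τ₁ h₁ τ₂ h₂
  by_contra hne
  obtain ⟨ℓ, hℓ⟩ := Function.ne_iff.mp hne
  have hpair : ↑({τ₁, τ₂} : Finset Cantor) ⊆ F := by
    simpa [Set.insert_subset_iff] using ⟨h₁, h₂⟩
  have hnear : ∀ᶠ k in atTop, ((ℓ + 1 : ℕ) : ℕ∞) ≤ (Fk k).inf (wedgeLen (σk k)) :=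
    eventually_atTop.mpr (hlim (ℓ + 1))
  obtain ⟨k, hsub, hk⟩ := ((hF.frequently_subset_of_χS hpair).and_eventually hnear).exists
  have hlt : (ℓ : ℕ∞) < (Fk k).inf (wedgeLen (σk k)) :=
    (Nat.cast_lt.mpr ℓ.lt_succ_self).trans_le hk
  have e₁ := apply_eq_of_lt_inf_wedgeLen (hsub (by simp : τ₁ ∈ _)) hlt
  have e₂ := apply_eq_of_lt_inf_wedgeLen (hsub (by simp : τ₂ ∈ _)) hlt
  exact hℓ (e₁.symm.trans e₂)

theorem cluster_point_subsingleton (Fk : ℕ → Finset Cantor) (σk : ℕ → Cantor)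
    (hmem : ∀ k, ∃ n m M, GS n (Fk k) (σk k) m M)
    (hlim : ∀ N : ℕ, ∃ k₀ : ℕ, ∀ k ≥ k₀, (N : ℕ∞) ≤ (Fk k).inf (wedgeLen (σk k)))
    (F : Set Cantor)
    (hF : MapClusterPt (χS F) Filter.atTop (fun k => χS (↑(Fk k) : Set Cantor))) :
    F.Subsingleton :=
  cluster_point_subsingleton_general Fk σk hlim F hF
end

section
/- Let n ∈ ℕ, (F,σ) ∈ 𝒢ₛ_n, and σ′ ∈ 2^ℕ be such that σ′∧τ = σ∧τ for all τ ∈ F. Then (F,σ′) ∈ 𝒢ₛ_n, and moreover min(F,σ′) = min(F,σ) and max(F,σ′) = max(F,σ). -/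
lemma wedgeLen_ne_top {a b : Cantor} (h : a ≠ b) : wedgeLen a b ≠ ⊤ := by
  simp [wedgeLen, dif_neg h]

lemma wedgeLen_comm_s8 (a b : Cantor) : wedgeLen a b = wedgeLen b a := by
  unfold wedgeLen
  by_cases h : a = b
  · simp [h]
  · rw [dif_neg h, dif_neg (Ne.symm h)]
    norm_cast
    apply le_antisymm
    · exact Nat.find_le (Nat.find_spec (Function.ne_iff.mp (Ne.symm h))).symm
    · exact Nat.find_le (Nat.find_spec (Function.ne_iff.mp h)).symm

lemma wedgeLen_agree {a b : Cantor} {i : ℕ} (h : (i : ℕ∞) < wedgeLen a b) :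
    a i = b i := by
  by_cases hab : a = b
  · rw [hab]
  · rw [wedgeLen, dif_neg hab] at h
    have : i < Nat.find (Function.ne_iff.mp hab) := by exact_mod_cast h
    have := Nat.find_min (Function.ne_iff.mp hab) this
    tauto

lemma wedgeLen_eq {a b : Cantor} {k : ℕ} (hlt : ∀ i < k, a i = b i)
    (hk : a k ≠ b k) : wedgeLen a b = (k : ℕ∞) := by
  have hab : a ≠ b := fun h => hk (by rw [h])
  rw [wedgeLen, dif_neg hab]
  norm_cast
  apply le_antisymm (Nat.find_le hk)
  rw [Nat.le_find_iff]
  intro i hi hne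
  exact hne (hlt i hi)

lemma wedgeLen_spec {a b : Cantor} (h : a ≠ b) :
    ∃ k : ℕ, wedgeLen a b = (k : ℕ∞) ∧ (∀ i < k, a i = b i) ∧ a k ≠ b k := by
  refine ⟨Nat.find (Function.ne_iff.mp h), by rw [wedgeLen, dif_neg h], ?_,
    Nat.find_spec (Function.ne_iff.mp h)⟩
  intro i hi
  have := Nat.find_min (Function.ne_iff.mp h) hi
  tauto

lemma wedgeLen_ultra {a b c : Cantor} (h : wedgeLen a b < wedgeLen b c) :
    wedgeLen a c = wedgeLen a b := by
  have hab : a ≠ b := by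
    rintro rfl
    rw [wedgeLen, dif_pos rfl] at h
    exact (not_top_lt h)
  obtain ⟨k, hk, hagree, hne⟩ := wedgeLen_spec hab
  rw [hk]
  refine wedgeLen_eq (fun i hi => ?_) ?_
  · have hb : b i = c i := wedgeLen_agree (lt_of_le_of_lt (le_of_lt (by
      rw [hk]; exact_mod_cast hi)) h)
    rw [hagree i hi, hb]
  · have hb : b k = c k := wedgeLen_agree (hk ▸ h)
    rw [← hb]; exact hne

lemma ne_of_wedgeLen_ne_top {a b : Cantor} (h : wedgeLen a b ≠ ⊤) : a ≠ b := by
  rintro rfl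
  rw [wedgeLen, dif_pos rfl] at h
  exact h rfl
lemma GS_bounds {n : ℕ} {F : Finset Cantor} {σ : Cantor} {m M : ℕ∞}
    (h : GS n F σ m M) :
    F.Nonempty ∧ ∀ τ ∈ F, m ≤ wedgeLen σ τ ∧ wedgeLen σ τ ≤ M := by
  induction h with
  | base d τ σ F h1 h2 h3 h4 hF =>
    have hsm : StrictMono (fun i => wedgeLen σ (τ i)) := fun i j hij => h3 i j hij
    refine ⟨⟨τ 0, (hF _).mpr ⟨0, rfl⟩⟩, ?_⟩
    intro x hx
    obtain ⟨i, rfl⟩ := (hF x).mp hx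
    exact ⟨hsm.monotone (Fin.zero_le i), hsm.monotone (Fin.le_last i)⟩
  | up n F σ m M h ih => exact ih
  | skipped n d Fs σs mins maxs σ F hGS hdisj hne h0 hmono hlt hd hF ih =>
    have hsm : StrictMono (fun i => wedgeLen σ (σs i)) := fun i j hij => hmono i j hij
    have key : ∀ i : Fin (d + 1), ∀ x ∈ Fs i, wedgeLen σ x = wedgeLen σ (σs i) := by
      intro i x hx
      have h1 : mins i ≤ wedgeLen (σs i) x := ((ih i).2 x hx).1
      have h2 : wedgeLen σ (σs i) < wedgeLen (σs i) x := lt_of_lt_of_le (hlt i) h1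
      exact wedgeLen_ultra h2
    obtain ⟨x0, hx0⟩ := (ih 0).1
    refine ⟨⟨x0, (hF _).mpr ⟨0, hx0⟩⟩, ?_⟩
    intro x hx
    obtain ⟨i, hi⟩ := (hF x).mp hx
    rw [key i x hi]
    exact ⟨hsm.monotone (Fin.zero_le i), hsm.monotone (Fin.le_last i)⟩
  | attached n d Fs mins maxs σ F hGS hdisj hord hd hF ih =>
    have hmm : ∀ i, mins i ≤ maxs i := by
      intro i
      obtain ⟨x, hx⟩ := (ih i).1
      obtain ⟨h1, h2⟩ := (ih i).2 x hx
      exact le_trans h1 h2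
    have hminsm : StrictMono mins := by
      rw [Fin.strictMono_iff_lt_succ]
      intro i
      exact lt_of_le_of_lt (hmm i.castSucc) (hord i)
    have hmaxsm : StrictMono maxs := by
      rw [Fin.strictMono_iff_lt_succ]
      intro i
      exact lt_of_lt_of_le (hord i) (hmm i.succ)
    obtain ⟨x0, hx0⟩ := (ih 0).1
    refine ⟨⟨x0, (hF _).mpr ⟨0, hx0⟩⟩, ?_⟩
    intro x hx
    obtain ⟨i, hi⟩ := (hF x).mp hx
    obtain ⟨h1, h2⟩ := (ih i).2 x hi
    exact ⟨le_trans (hminsm.monotone (Fin.zero_le i)) h1,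
      le_trans h2 (hmaxsm.monotone (Fin.le_last i))⟩

theorem GS_of_wedge_eq (n : ℕ) (hn : 1 ≤ n) (F : Finset Cantor) (σ σ' : Cantor)
    (m M : ℕ∞) (h : GS n F σ m M) (h' : ∀ τ ∈ F, wedgeLen σ' τ = wedgeLen σ τ) :
    GS n F σ' m M := by
  clear hn
  induction h generalizing σ' with
  | base d τ σ F h1 h2 h3 h4 hF =>
    have heq : ∀ i, wedgeLen σ' (τ i) = wedgeLen σ (τ i) :=
      fun i => h' (τ i) ((hF _).mpr ⟨i, rfl⟩)
    have hne : ∀ i, σ' ≠ τ i := by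
      intro i
      apply ne_of_wedgeLen_ne_top
      rw [heq i]
      exact wedgeLen_ne_top (h1 i)
    rw [← heq 0, ← heq (Fin.last d)]
    exact GS.base d τ σ' F hne (by rw [heq]; exact h2)
      (fun i j hij => by rw [heq, heq]; exact h3 i j hij)
      (by rw [heq]; exact h4) hF
  | up n F σ m M h ih => exact GS.up n F σ' m M (ih σ' h')
  | skipped n d Fs σs mins maxs σ F hGS hdisj hne h0 hmono hlt hd hF ih =>
    have heq : ∀ i, wedgeLen σ' (σs i) = wedgeLen σ (σs i) := by
      intro i
      obtain ⟨⟨x, hx⟩, hb⟩ := GS_bounds (hGS i)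
      have hxF : x ∈ F := (hF _).mpr ⟨i, hx⟩
      have h1 : mins i ≤ wedgeLen (σs i) x := (hb x hx).1
      have h2 : wedgeLen σ (σs i) < wedgeLen (σs i) x := lt_of_lt_of_le (hlt i) h1
      have h3 : wedgeLen σ x = wedgeLen σ (σs i) := wedgeLen_ultra h2
      have h4 : wedgeLen σ' x < wedgeLen x (σs i) := by
        rw [h' x hxF, h3, wedgeLen_comm_s8 x (σs i)]; exact h2
      rw [wedgeLen_ultra h4, h' x hxF, h3]
    have hne' : ∀ i, σ' ≠ σs i := by
      intro i
      apply ne_of_wedgeLen_ne_top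
      rw [heq i]
      exact wedgeLen_ne_top (hne i)
    rw [← heq 0, ← heq (Fin.last d)]
    exact GS.skipped n d Fs σs mins maxs σ' F hGS hdisj hne'
      (by rw [heq]; exact h0)
      (fun i j hij => by rw [heq, heq]; exact hmono i j hij)
      (fun i => by rw [heq]; exact hlt i)
      (by rw [heq]; exact hd) hF
  | attached n d Fs mins maxs σ F hGS hdisj hord hd hF ih =>
    refine GS.attached n d Fs mins maxs σ' F (fun i => ih i σ' ?_) hdisj hord hd hF
    intro x hx
    exact h' x ((hF _).mpr ⟨i, hx⟩)
end

section
/- Let n ∈ ℕ, (F,σ) ∈ 𝒢ₛ_n, and let G be a nonempty subset of F. Then (G,σ) ∈ 𝒢ₛ_n. Consequently, the family 𝒢_n is hereditary: if F ∈ 𝒢_n and G ⊆ F, then G ∈ 𝒢_n. -/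
/-- The family `𝒢_n` of finite subsets of the Cantor set. -/
def Gfam (n : ℕ) : Set (Finset Cantor) :=
  {F | F = ∅ ∨ ∃ σ m M, GS n F σ m M}

/-! Restricting a derivation of `(F, σ)` to `G ⊆ F` keeps the indices `i` whose piece meets `G`,
re-enumerated increasingly by some `f : Fin (e + 1) ↪o Fin (d + 1)`. Every condition of the
definition survives: the strict chains of wedges and the chain `maxs < mins` pass to
subsequences, the length constraint `e + 1 ≤ d + 1 ≤ min` only gets easier since the first
kept index is at least `0`, and by induction each kept piece has a derivation whose `min` is
no smaller and whose `max` is no larger than before. -/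

theorem exists_orderEmbedding_fin_enum {α : Type*} [Fintype α] [LinearOrder α]
    (p : α → Prop) (hp : ∃ a, p a) :
    ∃ (e : ℕ) (f : Fin (e + 1) ↪o α), (∀ k, p (f k)) ∧ ∀ a, p a → a ∈ Set.range f := by
  classical
  set S := Finset.univ.filter p
  have hS : S.Nonempty := let ⟨a, ha⟩ := hp; ⟨a, by simpa [S] using ha⟩
  set f := S.orderEmbOfFin (Nat.sub_add_cancel hS.card_pos).symm
  have hf : Set.range f = {a | p a} := by simp [f, S]
  exact ⟨S.card - 1, f, fun k => hf.subset (Set.mem_range_self k), fun a ha => hf ▸ ha⟩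

section Chain

variable {α : Type*} [Preorder α] {d : ℕ} {a b : Fin (d + 1) → α}

theorem Fin.lt_of_chain (hab : ∀ i, a i ≤ b i) (hord : ∀ i : Fin d, b i.castSucc < a i.succ)
    {i j : Fin (d + 1)} (hij : i < j) : b i < a j := by
  induction j using Fin.induction with
  | zero => exact absurd hij (Fin.not_lt_zero i)
  | succ k ih =>
    rcases (Fin.le_castSucc_iff.mpr hij).lt_or_eq with hlt | rfl
    · exact (ih hlt).trans_le ((hab _).trans (hord k).le)
    · exact hord k

theorem Fin.monotone_left_of_chain (hab : ∀ i, a i ≤ b i)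
    (hord : ∀ i : Fin d, b i.castSucc < a i.succ) : Monotone a := by
  intro i j hij
  rcases hij.lt_or_eq with hlt | rfl
  · exact (hab i).trans (Fin.lt_of_chain hab hord hlt).le
  · exact le_rfl

theorem Fin.monotone_right_of_chain (hab : ∀ i, a i ≤ b i)
    (hord : ∀ i : Fin d, b i.castSucc < a i.succ) : Monotone b := by
  intro i j hij
  rcases hij.lt_or_eq with hlt | rfl
  · exact ((Fin.lt_of_chain hab hord hlt).trans_le (hab j)).le
  · exact le_rfl

end Chain

section Pieces

variable {α ι κ : Type*} [DecidableEq α] {F G : Finset α} {Fs : ι → Finset α}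

theorem exists_inter_nonempty_of_subset (hF : ∀ x, x ∈ F ↔ ∃ i, x ∈ Fs i) (hGF : G ⊆ F)
    (hG : G.Nonempty) : ∃ i, (G ∩ Fs i).Nonempty := by
  obtain ⟨x, hx⟩ := hG
  obtain ⟨i, hi⟩ := (hF x).mp (hGF hx)
  exact ⟨i, x, Finset.mem_inter.mpr ⟨hx, hi⟩⟩

theorem mem_iff_exists_mem_inter (hF : ∀ x, x ∈ F ↔ ∃ i, x ∈ Fs i)
    (hGF : G ⊆ F) {f : κ → ι} (hf : ∀ i, (G ∩ Fs i).Nonempty → i ∈ Set.range f) (x : α) :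
    x ∈ G ↔ ∃ k, x ∈ G ∩ Fs (f k) := by
  refine ⟨fun hx => ?_, fun ⟨k, hk⟩ => (Finset.mem_inter.mp hk).1⟩
  obtain ⟨i, hi⟩ := (hF x).mp (hGF hx)
  have hxi : x ∈ G ∩ Fs i := Finset.mem_inter.mpr ⟨hx, hi⟩
  obtain ⟨k, rfl⟩ := hf i ⟨x, hxi⟩
  exact ⟨k, hxi⟩

theorem inter_pairwise_disjoint (hdisj : ∀ i j, i ≠ j → ∀ x, x ∈ Fs i → x ∉ Fs j) {f : κ → ι} (hf : f.Injective) :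
    ∀ k l, k ≠ l → ∀ x, x ∈ G ∩ Fs (f k) → x ∉ G ∩ Fs (f l) :=
  fun k l hkl x hk hl => hdisj (f k) (f l) (hf.ne hkl) x
    (Finset.mem_inter.mp hk).2 (Finset.mem_inter.mp hl).2

end Pieces

namespace GS

theorem min_le_max {n : ℕ} {F : Finset Cantor} {σ : Cantor} {m M : ℕ∞}
    (h : GS n F σ m M) : m ≤ M := by
  induction h with
  | base d τ σ F _ _ h3 => exact (StrictMono.monotone fun i j => h3 i j) (Fin.zero_le _)
  | up _ _ _ _ _ _ ih => exact ih
  | skipped _ d _ σs _ _ σ _ _ _ _ _ hmono =>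
    exact (StrictMono.monotone fun i j => hmono i j) (Fin.zero_le _)
  | attached _ _ _ _ _ _ _ _ _ hord _ _ ih =>
    exact (ih 0).trans (Fin.monotone_right_of_chain ih hord (Fin.zero_le _))

theorem exists_of_subset {n : ℕ} {F : Finset Cantor} {σ : Cantor} {m M : ℕ∞}
    (h : GS n F σ m M) {G : Finset Cantor} (hGF : G ⊆ F) (hG : G.Nonempty) :
    ∃ m' M', GS n G σ m' M' ∧ m ≤ m' ∧ M' ≤ M := by
  classical
  induction h generalizing G with
  | base d τ σ F h1 h2 h3 h4 hF =>
    have hw : StrictMono fun i => wedgeLen σ (τ i) := fun i j => h3 i j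
    obtain ⟨e, f, hfG, hf⟩ := exists_orderEmbedding_fin_enum (fun i => τ i ∈ G)
      (let ⟨x, hx⟩ := hG; let ⟨i, hi⟩ := (hF x).mp (hGF hx); ⟨i, hi ▸ hx⟩)
    have hed : ((e + 1 : ℕ) : ℕ∞) ≤ (d + 1 : ℕ) := by
      exact_mod_cast Fin.le_of_embedding f.toEmbedding
    have hmem : ∀ x, x ∈ G ↔ ∃ k, x = τ (f k) := by
      refine fun x => ⟨fun hx => ?_, fun ⟨k, hk⟩ => hk ▸ hfG k⟩
      obtain ⟨i, rfl⟩ := (hF x).mp (hGF hx)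
      obtain ⟨k, rfl⟩ := hf i hx
      exact ⟨k, rfl⟩
    exact ⟨_, _, base e (τ ∘ f) σ G (fun k => h1 _) (h2.trans_le (hw.monotone (Fin.zero_le _)))
      (fun k l hkl => (hw.comp f.strictMono) hkl)
      (hed.trans (h4.trans (hw.monotone (Fin.zero_le _)))) hmem,
      hw.monotone (Fin.zero_le _), hw.monotone (Fin.le_last _)⟩
  | up _ _ _ _ _ _ ih =>
    obtain ⟨m', M', h', hm, hM⟩ := ih hGF hG
    exact ⟨m', M', up _ _ _ _ _ h', hm, hM⟩
  | skipped n d Fs σs mins maxs σ F _ hdisj hne h0 hmono hlt hd hF ih =>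
    have hw : StrictMono fun i => wedgeLen σ (σs i) := fun i j => hmono i j
    obtain ⟨e, f, hfG, hf⟩ := exists_orderEmbedding_fin_enum _
      (exists_inter_nonempty_of_subset hF hGF hG)
    have hed : ((e + 1 : ℕ) : ℕ∞) ≤ (d + 1 : ℕ) := by
      exact_mod_cast Fin.le_of_embedding f.toEmbedding
    choose mins' maxs' hGS' hm' hM' using fun k =>
      ih (f k) (G := G ∩ Fs (f k)) Finset.inter_subset_right (hfG k)
    exact ⟨_, _, skipped n e (fun k => G ∩ Fs (f k)) (σs ∘ f) mins' maxs' σ G hGS'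
      (inter_pairwise_disjoint hdisj f.injective) (fun k => hne _)
      (h0.trans_le (hw.monotone (Fin.zero_le _))) (fun k l hkl => (hw.comp f.strictMono) hkl)
      (fun k => (hlt (f k)).trans_le (hm' k)) (hed.trans (hd.trans (hw.monotone (Fin.zero_le _))))
      (mem_iff_exists_mem_inter hF hGF hf),
      hw.monotone (Fin.zero_le _), hw.monotone (Fin.le_last _)⟩
  | attached n d Fs mins maxs σ F hGS hdisj hord hd hF ih =>
    have hmm : ∀ i, mins i ≤ maxs i := fun i => (hGS i).min_le_max
    have hmins := Fin.monotone_left_of_chain hmm hord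
    obtain ⟨e, f, hfG, hf⟩ := exists_orderEmbedding_fin_enum _
      (exists_inter_nonempty_of_subset hF hGF hG)
    have hed : ((e + 1 : ℕ) : ℕ∞) ≤ (d + 1 : ℕ) := by
      exact_mod_cast Fin.le_of_embedding f.toEmbedding
    choose mins' maxs' hGS' hm' hM' using fun k =>
      ih (f k) (G := G ∩ Fs (f k)) Finset.inter_subset_right (hfG k)
    have hord' : ∀ k : Fin e, maxs' k.castSucc < mins' k.succ := fun k =>
      calc maxs' k.castSucc ≤ maxs (f k.castSucc) := hM' _
        _ < mins (f k.succ) := Fin.lt_of_chain hmm hord (f.strictMono k.castSucc_lt_succ)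
        _ ≤ mins' k.succ := hm' _
    have hmin : mins 0 ≤ mins' 0 := (hmins (Fin.zero_le _)).trans (hm' 0)
    exact ⟨_, _, attached n e (fun k => G ∩ Fs (f k)) mins' maxs' σ G hGS'
      (inter_pairwise_disjoint hdisj f.injective) hord' (hed.trans (hd.trans hmin))
      (mem_iff_exists_mem_inter hF hGF hf),
      hmin, (hM' _).trans (Fin.monotone_right_of_chain hmm hord (Fin.le_last _))⟩

end GS

theorem GS_hereditary_general (n : ℕ) :
    (∀ (F : Finset Cantor) (σ : Cantor) (m M : ℕ∞), GS n F σ m M →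
      ∀ G : Finset Cantor, G ⊆ F → G.Nonempty → ∃ m' M', GS n G σ m' M') ∧
    (∀ F ∈ Gfam n, ∀ G ⊆ F, G ∈ Gfam n) := by
  refine ⟨fun F σ m M h G hGF hG => ?_, fun F hF G hGF => ?_⟩
  · obtain ⟨m', M', h', -⟩ := h.exists_of_subset hGF hG
    exact ⟨m', M', h'⟩
  · rcases G.eq_empty_or_nonempty with rfl | hG
    · exact Or.inl rfl
    rcases hF with rfl | ⟨σ, m, M, h⟩
    · exact absurd (hG.mono hGF) Finset.not_nonempty_empty
    · obtain ⟨m', M', h', -⟩ := h.exists_of_subset hGF hG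
      exact Or.inr ⟨σ, m', M', h'⟩

theorem GS_hereditary (n : ℕ) (hn : 1 ≤ n) :
    (∀ (F : Finset Cantor) (σ : Cantor) (m M : ℕ∞), GS n F σ m M →
      ∀ G : Finset Cantor, G ⊆ F → G.Nonempty → ∃ m' M', GS n G σ m' M') ∧
    (∀ F ∈ Gfam n, ∀ G ⊆ F, G ∈ Gfam n) :=
  GS_hereditary_general n
end

section
/- For every infinite subset B of 2^ℕ there exists an injective map φ : ℕ → B such that φ(F) ∈ 𝒢_n for every n ∈ ℕ and every F ∈ S_n. In particular, for every n ∈ ℕ the family 𝒢_n is n-large: for every infinite B ⊆ 2^ℕ there is an injective φ : ℕ → B with φ(F) ∈ 𝒢_n for all F ∈ S_n. -/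
/-- The Schreier families `S_n` (for `n ≥ 1`; the value at `0` is a dummy). -/
def Schreier : ℕ → Set (Finset ℕ)
  | 0 => {∅}
  | 1 => {F | ∀ k ∈ F, F.card ≤ k}
  | (n + 2) => {F | F = ∅ ∨ ∃ d : ℕ, ∃ Fs : Fin (d + 1) → Finset ℕ,
      (∀ i, Fs i ∈ Schreier (n + 1) ∧ (Fs i).Nonempty) ∧
      (∀ i : Fin d, ∀ a ∈ Fs i.castSucc, ∀ b ∈ Fs i.succ, a < b) ∧
      (∀ k ∈ Fs 0, d + 1 ≤ k) ∧
      (∀ x, x ∈ F ↔ ∃ i, x ∈ Fs i)}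

/-!
By compactness of `2^ℕ`, the infinite set `B` has an accumulation point `σ`, so it contains
`τ₀, τ₁, …`, all different from `σ`, with `|σ∧τ_k|` strictly increasing (hence `k ≤ |σ∧τ_k|`).
For `φ k = τ_k`, every nonempty `F ∈ S_n` gives `(φ(F), σ) ∈ 𝒢ₛ_n` using only the base case and
attached branchings at `σ`, with `min = |σ∧τ_{min F}|` and `max = |σ∧τ_{max F}|`: the Schreier
conditions `#F ≤ min F`, `d ≤ min F₁` and `max F_i < min F_{i+1}` transfer along `k ↦ |σ∧τ_k|`.
-/

open PiNat

lemma wedgeLen_self (σ : Cantor) : wedgeLen σ σ = ⊤ := by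
  simp [wedgeLen]

lemma wedgeLen_of_ne {σ τ : Cantor} (h : σ ≠ τ) : wedgeLen σ τ = firstDiff σ τ := by
  simp only [wedgeLen, h, dite_false, firstDiff_def, ne_eq, not_false_eq_true, dite_true]
  congr

lemma natCast_le_wedgeLen_iff_mem_cylinder {σ τ : Cantor} (h : σ ≠ τ) (n : ℕ) :
    (n : ℕ∞) ≤ wedgeLen σ τ ↔ τ ∈ cylinder σ n := by
  rw [wedgeLen_of_ne h, Nat.cast_le, firstDiff_comm, mem_cylinder_iff_le_firstDiff h.symm]

lemma Set.Infinite.exists_forall_exists_natCast_lt_wedgeLen {B : Set Cantor} (hB : B.Infinite) :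
    ∃ σ, ∀ N : ℕ, ∃ τ ∈ B, τ ≠ σ ∧ (N : ℕ∞) < wedgeLen σ τ := by
  obtain ⟨σ, hσ⟩ := hB.exists_accPt_principal
  refine ⟨σ, fun N => ?_⟩
  obtain ⟨τ, ⟨hne, hτB⟩, hcyl⟩ := ((accPt_iff_frequently.1 hσ).and_eventually
    ((isOpen_cylinder _ σ (N + 1)).mem_nhds (self_mem_cylinder σ _))).exists
  refine ⟨τ, hτB, hne, ?_⟩
  rw [← ENat.add_one_le_iff (ENat.natCast_ne_top N)]
  exact_mod_cast (natCast_le_wedgeLen_iff_mem_cylinder hne.symm _).2 hcyl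

lemma exists_seq_strictMono_wedgeLen {B : Set Cantor} {σ : Cantor}
    (h : ∀ N : ℕ, ∃ τ ∈ B, τ ≠ σ ∧ (N : ℕ∞) < wedgeLen σ τ) :
    ∃ τ : ℕ → Cantor, (∀ k, τ k ∈ B) ∧ StrictMono fun k => wedgeLen σ (τ k) := by
  let p (m : ℕ) : Prop := ∃ τ ∈ B, τ ≠ σ ∧ wedgeLen σ τ = m
  have hp : (Set.ofPred p).Infinite := Set.infinite_of_forall_exists_gt fun N => by
    obtain ⟨τ, hτB, hne, hlt⟩ := h N
    rw [wedgeLen_of_ne hne.symm] at hlt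
    exact ⟨_, ⟨τ, hτB, hne, wedgeLen_of_ne hne.symm⟩, by exact_mod_cast hlt⟩
  choose τ hτB _ hτ using Nat.nth_mem_of_infinite hp
  refine ⟨τ, hτB, fun k l hkl => ?_⟩
  simp only [hτ, Nat.cast_lt]
  exact Nat.nth_strictMono hp hkl

section Blocks

variable {d : ℕ} {Fs : Fin (d + 1) → Finset ℕ} (hne : ∀ i, (Fs i).Nonempty)
  (hcons : ∀ i : Fin d, ∀ a ∈ Fs i.castSucc, ∀ b ∈ Fs i.succ, a < b)
include hne hcons

lemma max'_lt_min'_of_lt {i j : Fin (d + 1)} (hij : i < j) :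
    (Fs i).max' (hne i) < (Fs j).min' (hne j) := by
  have hmax : StrictMono fun i => (Fs i).max' (hne i) := Fin.strictMono_iff_lt_succ.2 fun k =>
    (hcons k _ (Finset.max'_mem _ _) _ (Finset.max'_mem _ _))
  obtain ⟨k, rfl⟩ := Fin.exists_succ_eq.2 (Fin.pos_iff_ne_zero.1 ((Fin.zero_le i).trans_lt hij))
  exact (hmax.monotone (Fin.le_castSucc_iff.2 hij)).trans_lt
    (hcons k _ (Finset.max'_mem _ _) _ (Finset.min'_mem _ _))

lemma lt_of_mem_of_mem_of_lt {i j : Fin (d + 1)} (hij : i < j) {a b : ℕ} (ha : a ∈ Fs i)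
    (hb : b ∈ Fs j) : a < b :=
  ((Fs i).le_max' a ha).trans_lt <|
    (max'_lt_min'_of_lt hne hcons hij).trans_le ((Fs j).min'_le b hb)

lemma min'_eq_min'_zero {F : Finset ℕ} (hF : ∀ x, x ∈ F ↔ ∃ i, x ∈ Fs i) (hFne : F.Nonempty) :
    F.min' hFne = (Fs 0).min' (hne 0) := by
  refine le_antisymm (F.min'_le _ ((hF _).2 ⟨0, Finset.min'_mem _ _⟩))
    (F.le_min' _ _ fun y hy => ?_)
  obtain ⟨i, hi⟩ := (hF y).1 hy
  rcases (Fin.zero_le i).eq_or_lt with rfl | h0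
  · exact (Fs 0).min'_le y hi
  · exact (lt_of_mem_of_mem_of_lt hne hcons h0 (Finset.min'_mem _ _) hi).le

lemma max'_eq_max'_last {F : Finset ℕ} (hF : ∀ x, x ∈ F ↔ ∃ i, x ∈ Fs i) (hFne : F.Nonempty) :
    F.max' hFne = (Fs (Fin.last d)).max' (hne _) := by
  refine le_antisymm (F.max'_le _ _ fun y hy => ?_)
    (F.le_max' _ ((hF _).2 ⟨_, Finset.max'_mem _ _⟩))
  obtain ⟨i, hi⟩ := (hF y).1 hy
  rcases (Fin.le_last i).eq_or_lt with rfl | hl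
  · exact (Fs _).le_max' y hi
  · exact (lt_of_mem_of_mem_of_lt hne hcons hl hi (Finset.max'_mem _ _)).le

end Blocks

section SchreierImage

variable {σ : Cantor} {φ : ℕ ↪ Cantor} (hφ : StrictMono fun k => wedgeLen σ (φ k))
include hφ

lemma ne_of_strictMono_wedgeLen (k : ℕ) : σ ≠ φ k := fun h =>
  (hφ k.lt_succ_self).ne_top (h ▸ wedgeLen_self σ)

lemma natCast_le_wedgeLen_of_strictMono (k : ℕ) : (k : ℕ∞) ≤ wedgeLen σ (φ k) := by
  induction k with
  | zero => exact bot_le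
  | succ k ih =>
    rw [Nat.cast_succ, ENat.add_one_le_iff (ENat.natCast_ne_top k)]
    exact ih.trans_lt (hφ k.lt_succ_self)

lemma GS_one_map_of_mem_Schreier {F : Finset ℕ} (hF : F ∈ Schreier 1) (hne : F.Nonempty) :
    GS 1 (F.map φ) σ (wedgeLen σ (φ (F.min' hne))) (wedgeLen σ (φ (F.max' hne))) := by
  obtain ⟨d, hcard⟩ : ∃ d, F.card = d + 1 := Nat.exists_eq_add_one.2 hne.card_pos
  let e := F.orderEmbOfFin hcard
  have hmin : e 0 = F.min' hne := F.orderEmbOfFin_zero hcard d.succ_pos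
  have hmax : e (Fin.last d) = F.max' hne := F.orderEmbOfFin_last hcard d.succ_pos
  have hcard_le : ((d + 1 : ℕ) : ℕ∞) ≤ wedgeLen σ (φ (e 0)) := by
    have : F.card ≤ e 0 := hF _ (F.orderEmbOfFin_mem hcard 0)
    rw [hcard] at this
    exact (Nat.cast_le.2 this).trans (natCast_le_wedgeLen_of_strictMono hφ _)
  rw [← hmin, ← hmax]
  refine GS.base d (fun i => φ (e i)) σ _ (fun i => ne_of_strictMono_wedgeLen hφ _)
    (lt_of_lt_of_le (by simp) hcard_le) (fun i j hij => hφ (e.strictMono hij)) hcard_le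
    fun x => ?_
  rw [Finset.mem_map]
  constructor
  · rintro ⟨a, ha, rfl⟩
    obtain ⟨i, rfl⟩ : a ∈ Set.range e := by rwa [F.range_orderEmbOfFin]
    exact ⟨i, rfl⟩
  · rintro ⟨i, rfl⟩
    exact ⟨e i, F.orderEmbOfFin_mem hcard i, rfl⟩

lemma GS_add_two_map_of_mem_Schreier {n : ℕ}
    (ih : ∀ F ∈ Schreier (n + 1), ∀ hne : F.Nonempty,
      GS (n + 1) (F.map φ) σ (wedgeLen σ (φ (F.min' hne))) (wedgeLen σ (φ (F.max' hne))))
    {F : Finset ℕ} (hF : F ∈ Schreier (n + 2)) (hne : F.Nonempty) :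
    GS (n + 2) (F.map φ) σ (wedgeLen σ (φ (F.min' hne))) (wedgeLen σ (φ (F.max' hne))) := by
  obtain rfl | ⟨d, Fs, hSch, hcons, hd, hFs⟩ := hF
  · exact absurd rfl hne.ne_empty
  have hFsne i := (hSch i).2
  rw [min'_eq_min'_zero hFsne hcons hFs, max'_eq_max'_last hFsne hcons hFs]
  refine GS.attached (n + 1) d (fun i => (Fs i).map φ) (fun i => wedgeLen σ (φ ((Fs i).min' _)))
    (fun i => wedgeLen σ (φ ((Fs i).max' _))) σ _ (fun i => ih _ (hSch i).1 _) ?_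
    (fun i => hφ (max'_lt_min'_of_lt hFsne hcons i.castSucc_lt_succ))
    ((Nat.cast_le.2 (hd _ (Finset.min'_mem _ _))).trans
      (natCast_le_wedgeLen_of_strictMono hφ _)) fun x => ?_
  · intro i j hij
    have : Disjoint (Fs i) (Fs j) := by
      refine Finset.disjoint_left.2 fun a hi hj => ?_
      rcases hij.lt_or_gt with h | h
      · exact (lt_of_mem_of_mem_of_lt hFsne hcons h hi hj).false
      · exact (lt_of_mem_of_mem_of_lt hFsne hcons h hj hi).false
    exact Finset.disjoint_left.1 ((Finset.disjoint_map φ).2 this)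
  · simp only [Finset.mem_map, hFs]
    exact ⟨fun ⟨a, ⟨i, ha⟩, hx⟩ => ⟨i, a, ha, hx⟩, fun ⟨i, a, ha, hx⟩ => ⟨a, ⟨i, ha⟩, hx⟩⟩

theorem GS_map_of_mem_Schreier (n : ℕ) {F : Finset ℕ} (hF : F ∈ Schreier (n + 1))
    (hne : F.Nonempty) :
    GS (n + 1) (F.map φ) σ (wedgeLen σ (φ (F.min' hne))) (wedgeLen σ (φ (F.max' hne))) := by
  induction n generalizing F with
  | zero => exact GS_one_map_of_mem_Schreier hφ hF hne
  | succ n ih => exact GS_add_two_map_of_mem_Schreier hφ (fun F hF hne => ih hF hne) hF hne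

end SchreierImage

theorem Gfam_n_large (B : Set Cantor) (hB : B.Infinite) :
    ∃ φ : ℕ ↪ Cantor, (∀ k, φ k ∈ B) ∧
      ∀ n : ℕ, 1 ≤ n → ∀ F ∈ Schreier n, F.map φ ∈ Gfam n := by
  obtain ⟨σ, hσ⟩ := hB.exists_forall_exists_natCast_lt_wedgeLen
  obtain ⟨τ, hτB, hτ⟩ := exists_seq_strictMono_wedgeLen hσ
  let φ : ℕ ↪ Cantor := ⟨τ, Function.Injective.of_comp (f := wedgeLen σ) hτ.injective⟩
  refine ⟨φ, hτB, fun n hn F hF => ?_⟩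
  obtain ⟨n, rfl⟩ := Nat.exists_eq_add_of_le' hn
  rcases F.eq_empty_or_nonempty with rfl | hne
  · exact Or.inl (Finset.map_empty φ)
  · exact Or.inr ⟨σ, _, _, GS_map_of_mem_Schreier (φ := φ) hτ n hF hne⟩
end

section
/- Let σ ∈ 2^ℕ and (τ_k)_{k≥1} be a sequence in 2^ℕ such that τ_k ≠ σ for all k, σ∧τ_1 ≠ ∅, and σ∧τ_k ⊏ σ∧τ_{k+1} for all k. Then for every n ∈ ℕ and every nonempty F ∈ S_n, the pair ({τ_k : k ∈ F}, σ) belongs to 𝒢ₛ_n, with min({τ_k : k ∈ F}, σ) = |σ∧τ_{min F}| and max({τ_k : k ∈ F}, σ) = |σ∧τ_{max F}|. -/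
lemma schreier_pos : ∀ n : ℕ, ∀ F ∈ Schreier (n + 1), ∀ k ∈ F, 1 ≤ k := by
  intro n
  induction n with
  | zero =>
    intro F hFS k hk
    simp only [Schreier, Set.mem_setOf_eq] at hFS
    have h1 := hFS k hk
    have h2 : 0 < F.card := Finset.card_pos.mpr ⟨k, hk⟩
    omega
  | succ n ih =>
    intro F hFS k hk
    simp only [Schreier, Set.mem_setOf_eq] at hFS
    rcases hFS with rfl | ⟨d, Fs, hS, _, _, hunion⟩
    · simp at hk
    · obtain ⟨i, hi⟩ := (hunion k).mp hk
      exact ih _ (hS i).1 k hi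

section Chain
variable (σ : Cantor) (τ : ℕ → Cantor)

lemma wedge_lt (hmono : ∀ k, 1 ≤ k → wedgeLen σ (τ k) < wedgeLen σ (τ (k + 1))) :
    ∀ k l, 1 ≤ k → k < l → wedgeLen σ (τ k) < wedgeLen σ (τ l) := by
  intro k l hk hkl
  induction l with
  | zero => omega
  | succ l ih =>
    rcases Nat.lt_succ_iff_lt_or_eq.mp hkl with h | h
    · exact (ih h).trans (hmono l (by omega))
    · subst h; exact hmono k hk

lemma wedge_ge (h0 : 0 < wedgeLen σ (τ 1))
    (hmono : ∀ k, 1 ≤ k → wedgeLen σ (τ k) < wedgeLen σ (τ (k + 1))) :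
    ∀ k : ℕ, 1 ≤ k → (k : ℕ∞) ≤ wedgeLen σ (τ k) := by
  intro k hk
  induction k with
  | zero => omega
  | succ k ih =>
    rcases Nat.eq_zero_or_pos k with rfl | hk1
    · simpa using Order.add_one_le_of_lt h0
    · have h1 : (k : ℕ∞) < wedgeLen σ (τ (k + 1)) :=
        lt_of_le_of_lt (ih hk1) (hmono k hk1)
      have := Order.add_one_le_of_lt h1
      push_cast
      exact this
end Chain

theorem GS_of_schreier_chain (σ : Cantor) (τ : ℕ → Cantor)
    (hne : ∀ k, 1 ≤ k → τ k ≠ σ)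
    (h0 : 0 < wedgeLen σ (τ 1))
    (hmono : ∀ k, 1 ≤ k → wedgeLen σ (τ k) < wedgeLen σ (τ (k + 1))) :
    ∀ n : ℕ, 1 ≤ n → ∀ F ∈ Schreier n, ∀ hF : F.Nonempty,
      ∀ U : Finset Cantor, (∀ x, x ∈ U ↔ ∃ k ∈ F, x = τ k) →
        GS n U σ (wedgeLen σ (τ (F.min' hF))) (wedgeLen σ (τ (F.max' hF))) := by
  classical
  have wlt := wedge_lt σ τ hmono
  have wge := wedge_ge σ τ h0 hmono
  have tne : ∀ k l : ℕ, 1 ≤ k → 1 ≤ l → k ≠ l → τ k ≠ τ l := by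
    intro k l hk hl hkl heq
    rcases hkl.lt_or_gt with h | h
    · exact absurd (wlt k l hk h) (by rw [heq]; exact lt_irrefl _)
    · exact absurd (wlt l k hl h) (by rw [heq]; exact lt_irrefl _)
  intro n
  induction n with
  | zero => intro h; exact absurd h (by omega)
  | succ m ih =>
    intro _ F hFS hF U hU
    cases m with
    | zero =>
      -- base case: Schreier 1
      simp only [Schreier, Set.mem_setOf_eq] at hFS
      have hpos : ∀ k ∈ F, 1 ≤ k := fun k hk =>
        le_trans (Finset.card_pos.mpr hF) (hFS k hk)
      obtain ⟨d, hd⟩ : ∃ d, F.card = d + 1 :=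
        ⟨F.card - 1, (Nat.succ_pred_eq_of_pos (Finset.card_pos.mpr hF)).symm⟩
      set e := F.orderIsoOfFin hd with he
      have hmem : ∀ i, (e i : ℕ) ∈ F := fun i => (e i).2
      have hemono : ∀ i j : Fin (d + 1), i < j → (e i : ℕ) < (e j : ℕ) :=
        fun i j h => Subtype.coe_lt_coe.mpr (e.strictMono h)
      have hsurj : ∀ x, x ∈ F → ∃ i, (e i : ℕ) = x := fun x hx =>
        ⟨e.symm ⟨x, hx⟩, by simp⟩
      have hmin : F.min' hF = (e 0 : ℕ) := by
        apply le_antisymm (Finset.min'_le _ _ (hmem 0))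
        obtain ⟨i, hi⟩ := hsurj _ (Finset.min'_mem F hF)
        rw [← hi]
        exact Subtype.coe_le_coe.mpr (e.monotone (Fin.zero_le i))
      have hmax : F.max' hF = (e (Fin.last d) : ℕ) := by
        apply le_antisymm _ (Finset.le_max' _ _ (hmem _))
        obtain ⟨i, hi⟩ := hsurj _ (Finset.max'_mem F hF)
        rw [← hi]
        exact Subtype.coe_le_coe.mpr (e.monotone (Fin.le_last i))
      rw [hmin, hmax]
      refine GS.base d (fun i => τ (e i)) σ U
        (fun i => (hne _ (hpos _ (hmem i))).symm) ?_ ?_ ?_ ?_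
      · have h1 : (0 : ℕ∞) < ((e 0 : ℕ) : ℕ∞) := by
          exact_mod_cast hpos _ (hmem 0)
        exact h1.trans_le (wge _ (hpos _ (hmem 0)))
      · exact fun i j h => wlt _ _ (hpos _ (hmem i)) (hemono i j h)
      · calc ((d + 1 : ℕ) : ℕ∞) ≤ ((e 0 : ℕ) : ℕ∞) := by
              exact_mod_cast hd ▸ hFS _ (hmem 0)
          _ ≤ _ := wge _ (hpos _ (hmem 0))
      · intro x
        rw [hU x]
        constructor
        · rintro ⟨k, hk, rfl⟩
          obtain ⟨i, hi⟩ := hsurj k hk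
          exact ⟨i, (congrArg τ hi).symm⟩
        · rintro ⟨i, rfl⟩
          exact ⟨e i, hmem i, rfl⟩
    | succ m' =>
      simp only [Schreier, Set.mem_setOf_eq] at hFS
      rcases hFS with rfl | ⟨d, Fs, hS, hblocks, hfirst, hunion⟩
      · exact absurd rfl (Finset.nonempty_iff_ne_empty.mp hF)
      have hFsne : ∀ i, (Fs i).Nonempty := fun i => (hS i).2
      have epos : ∀ i, ∀ k ∈ Fs i, 1 ≤ k := fun i => schreier_pos m' _ (hS i).1
      have hsep : ∀ j i : Fin (d + 1), i < j → ∀ a ∈ Fs i, ∀ b ∈ Fs j, a < b := by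
        intro j
        induction j using Fin.induction with
        | zero => exact fun i hi => absurd hi (Fin.not_lt_zero i)
        | succ j' ihj =>
          intro i hi a ha b hb
          rcases eq_or_lt_of_le (Fin.le_castSucc_iff.mpr hi) with h | h
          · rw [h] at ha
            exact hblocks j' a ha b hb
          · obtain ⟨c, hc⟩ := hFsne j'.castSucc
            exact (ihj i h a ha c hc).trans (hblocks j' c hc b hb)
      have hmin0 : ∀ i, ∀ b ∈ Fs i, (Fs 0).min' (hFsne 0) ≤ b := by
        intro i b hb
        rcases eq_or_ne i 0 with rfl | h
        · exact Finset.min'_le _ _ hb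
        · exact le_of_lt (hsep i 0 (Fin.pos_iff_ne_zero.mpr h)
            _ (Finset.min'_mem _ _) b hb)
      have hmaxL : ∀ i, ∀ a ∈ Fs i, a ≤ (Fs (Fin.last d)).max' (hFsne _) := by
        intro i a ha
        rcases eq_or_ne i (Fin.last d) with rfl | h
        · exact Finset.le_max' _ _ ha
        · exact le_of_lt (hsep (Fin.last d) i (Fin.lt_last_iff_ne_last.mpr h)
            a ha _ (Finset.max'_mem _ _))
      have hminF : F.min' hF = (Fs 0).min' (hFsne 0) := by
        apply le_antisymm (Finset.min'_le _ _ ((hunion _).mpr ⟨0, Finset.min'_mem _ _⟩))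
        obtain ⟨i, hi⟩ := (hunion _).mp (Finset.min'_mem F hF)
        exact hmin0 i _ hi
      have hmaxF : F.max' hF = (Fs (Fin.last d)).max' (hFsne _) := by
        apply le_antisymm _ (Finset.le_max' _ _ ((hunion _).mpr ⟨_, Finset.max'_mem _ _⟩))
        obtain ⟨i, hi⟩ := (hunion _).mp (Finset.max'_mem F hF)
        exact hmaxL i _ hi
      set Us : Fin (d + 1) → Finset Cantor := fun i => (Fs i).image τ with hUs
      have hGS : ∀ i, GS (m' + 1) (Us i) σ
          (wedgeLen σ (τ ((Fs i).min' (hFsne i))))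
          (wedgeLen σ (τ ((Fs i).max' (hFsne i)))) := by
        intro i
        refine ih (by omega) (Fs i) (hS i).1 (hFsne i) (Us i) ?_
        intro x
        simp only [hUs, Finset.mem_image]
        constructor
        · rintro ⟨k, hk, rfl⟩; exact ⟨k, hk, rfl⟩
        · rintro ⟨k, hk, rfl⟩; exact ⟨k, hk, rfl⟩
      have hdisj : ∀ i j : Fin (d + 1), i ≠ j → ∀ x, x ∈ Us i → x ∉ Us j := by
        intro i j hij x hxi hxj
        simp only [hUs, Finset.mem_image] at hxi hxj
        obtain ⟨k, hk, rfl⟩ := hxi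
        obtain ⟨l, hl, hlk⟩ := hxj
        rcases eq_or_ne k l with rfl | hkl
        · rcases hij.lt_or_gt with h | h
          · exact lt_irrefl k (hsep j i h k hk k hl)
          · exact lt_irrefl k (hsep i j h k hl k hk)
        · exact tne l k (epos j l hl) (epos i k hk) (Ne.symm hkl) hlk
      have hord : ∀ i : Fin d,
          wedgeLen σ (τ ((Fs i.castSucc).max' (hFsne _))) <
          wedgeLen σ (τ ((Fs i.succ).min' (hFsne _))) := by
        intro i
        exact wlt _ _ (epos _ _ (Finset.max'_mem _ _))
          (hblocks i _ (Finset.max'_mem _ _) _ (Finset.min'_mem _ _))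
      have hdle : ((d + 1 : ℕ) : ℕ∞) ≤ wedgeLen σ (τ ((Fs 0).min' (hFsne 0))) := by
        have h1 : d + 1 ≤ (Fs 0).min' (hFsne 0) :=
          hfirst ((Fs 0).min' (hFsne 0)) (Finset.min'_mem (Fs 0) (hFsne 0))
        exact le_trans (Nat.cast_le.mpr h1)
          (wge _ (epos 0 _ (Finset.min'_mem (Fs 0) (hFsne 0))))
      have hFU : ∀ x, x ∈ U ↔ ∃ i, x ∈ Us i := by
        intro x
        rw [hU x]
        constructor
        · rintro ⟨k, hk, rfl⟩
          obtain ⟨i, hi⟩ := (hunion k).mp hk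
          exact ⟨i, Finset.mem_image_of_mem τ hi⟩
        · rintro ⟨i, hx⟩
          simp only [hUs, Finset.mem_image] at hx
          obtain ⟨k, hk, rfl⟩ := hx
          exact ⟨k, (hunion k).mpr ⟨i, hk⟩, rfl⟩
      rw [hminF, hmaxF]
      exact GS.attached (m' + 1) d Us
        (fun i => wedgeLen σ (τ ((Fs i).min' (hFsne i))))
        (fun i => wedgeLen σ (τ ((Fs i).max' (hFsne i))))
        σ U hGS hdisj hord hdle hFU
end

section
/- Let n₀ ∈ ℕ, σ ∈ 2^ℕ, and ((F_k,σ_k))_{k≥1} be a sequence with (F_k,σ_k) ∈ 𝒢ₛ_{n₀} for all k, satisfying: the F_k are pairwise disjoint; σ ≠ σ_k for all k; σ∧σ_1 ≠ ∅ and σ∧σ_k ⊏ σ∧σ_{k+1} for all k; and |σ∧σ_k| < min(F_k,σ_k) for all k. Then for every n ∈ ℕ and every nonempty G ∈ S_n, the pair (∪_{k∈G} F_k, σ) belongs to 𝒢ₛ_{n₀+n}, with min(∪_{k∈G} F_k, σ) = |σ∧σ_{min G}| and max(∪_{k∈G} F_k, σ) = |σ∧σ_{max G}|. -/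
/-! A set `G ∈ S_1` with elements `k₁ < ⋯ < k_d` gives a skipped branching `(F_{kᵢ}, σ_{kᵢ})`
of `σ`: the condition `d ≤ k₁` turns into `d ≤ |σ∧σ_{k₁}|` because `k ↦ |σ∧σ_k|` is strictly
increasing, hence `k ≤ |σ∧σ_k|`. A set `G ∈ S_{n+1}` is an admissible union `G₁ < ⋯ < G_d` of
sets of `S_n`; by induction each `∪_{k∈Gᵢ} F_k` carries the attached values
`|σ∧σ_{min Gᵢ}|, |σ∧σ_{max Gᵢ}|`, and these pieces form an attached branching of `σ`. -/

theorem one_le_of_mem_schreier {n : ℕ} {G : Finset ℕ} (hG : G ∈ Schreier (n + 1)) {k : ℕ}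
    (hk : k ∈ G) : 1 ≤ k := by
  induction n generalizing G with
  | zero => exact (Finset.card_pos.mpr ⟨k, hk⟩).trans_le (hG k hk)
  | succ m ih =>
    rcases hG with rfl | ⟨d, Gs, hGs, -, -, hmem⟩
    · simp at hk
    · obtain ⟨i, hi⟩ := (hmem k).mp hk
      exact ih (hGs i).1 hi

theorem natCast_le_of_strictMonoOn_Ici_one {f : ℕ → ℕ∞} (hf : StrictMonoOn f (Set.Ici 1))
    (h1 : 0 < f 1) (k : ℕ) : (k : ℕ∞) ≤ f k := by
  induction k with
  | zero => exact zero_le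
  | succ k ih =>
    have hlt : (k : ℕ∞) < f (k + 1) := by
      rcases k.eq_zero_or_pos with rfl | hk
      · simpa using h1
      · exact ih.trans_lt (hf (Set.mem_Ici.mpr hk) (Set.mem_Ici.mpr (by omega)) k.lt_succ_self)
    exact_mod_cast Order.add_one_le_of_lt hlt

section Blocks

variable {α : Type*} [LinearOrder α] {d : ℕ} {Gs : Fin (d + 1) → Finset α}

theorem lt_of_mem_block_of_mem_block (hne : ∀ i, (Gs i).Nonempty)
    (hord : ∀ i : Fin d, ∀ a ∈ Gs i.castSucc, ∀ b ∈ Gs i.succ, a < b)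
    {i j : Fin (d + 1)} (hij : i < j) {a b : α} (ha : a ∈ Gs i) (hb : b ∈ Gs j) : a < b := by
  induction j using Fin.induction generalizing b with
  | zero => exact absurd hij (Fin.not_lt_zero i)
  | succ k ih =>
    rcases (Fin.le_castSucc_iff.mpr hij).lt_or_eq with hik | rfl
    · obtain ⟨x, hx⟩ := hne k.castSucc
      exact (ih hik hx).trans (hord k x hx b hb)
    · exact hord k a ha b hb

variable {G : Finset α} (hG : ∀ x, x ∈ G ↔ ∃ i, x ∈ Gs i) (hne : ∀ i, (Gs i).Nonempty)
  (hord : ∀ i : Fin d, ∀ a ∈ Gs i.castSucc, ∀ b ∈ Gs i.succ, a < b)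
include hG hne hord

theorem min'_eq_min'_first_block (hGne : G.Nonempty) :
    G.min' hGne = (Gs 0).min' (hne 0) := by
  refine (G.isLeast_min' hGne).unique ⟨(hG _).mpr ⟨0, (Gs 0).min'_mem _⟩, fun y hy => ?_⟩
  obtain ⟨i, hi⟩ := (hG y).mp hy
  rcases (Fin.zero_le i).eq_or_lt with rfl | h0i
  · exact (Gs 0).min'_le y hi
  · exact (lt_of_mem_block_of_mem_block hne hord h0i ((Gs 0).min'_mem _) hi).le

theorem max'_eq_max'_last_block (hGne : G.Nonempty) :
    G.max' hGne = (Gs (Fin.last d)).max' (hne _) := by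
  refine (G.isGreatest_max' hGne).unique ⟨(hG _).mpr ⟨_, (Gs _).max'_mem _⟩, fun y hy => ?_⟩
  obtain ⟨i, hi⟩ := (hG y).mp hy
  rcases (Fin.le_last i).eq_or_lt with rfl | hil
  · exact (Gs _).le_max' y hi
  · exact (lt_of_mem_block_of_mem_block hne hord hil hi ((Gs _).max'_mem _)).le

end Blocks

section Branching

variable {Fk : ℕ → Finset Cantor}
  (hdisj : ∀ k l, 1 ≤ k → 1 ≤ l → k ≠ l → ∀ x, x ∈ Fk k → x ∉ Fk l)
include hdisj

theorem GS_skipped_of_mem_schreier_one {N : ℕ} {σ : Cantor} {σk : ℕ → Cantor}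
    {mins maxs : ℕ → ℕ∞} (hGS : ∀ k, 1 ≤ k → GS N (Fk k) (σk k) (mins k) (maxs k))
    (hσ : ∀ k, 1 ≤ k → σ ≠ σk k)
    (hw : StrictMonoOn (fun k => wedgeLen σ (σk k)) (Set.Ici 1))
    (hwk : ∀ k : ℕ, (k : ℕ∞) ≤ wedgeLen σ (σk k))
    (hlt : ∀ k, 1 ≤ k → wedgeLen σ (σk k) < mins k)
    {G : Finset ℕ} (hG : G ∈ Schreier 1) (hGne : G.Nonempty)
    {U : Finset Cantor} (hU : ∀ x, x ∈ U ↔ ∃ k ∈ G, x ∈ Fk k) :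
    GS (N + 1) U σ (wedgeLen σ (σk (G.min' hGne))) (wedgeLen σ (σk (G.max' hGne))) := by
  obtain ⟨d, hcard⟩ : ∃ d, G.card = d + 1 := Nat.exists_eq_succ_of_ne_zero hGne.card_pos.ne'
  set e := G.orderEmbOfFin hcard
  have he : ∀ i, e i ∈ G := G.orderEmbOfFin_mem hcard
  have hcard_le : ∀ i, d + 1 ≤ e i := fun i => by
    have := hG _ (he i); omega
  have hpos : ∀ i, 1 ≤ e i := fun i => by have := hcard_le i; omega
  have he0 : e 0 = G.min' hGne := by simpa using G.orderEmbOfFin_zero hcard d.succ_pos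
  have hel : e (Fin.last d) = G.max' hGne := by
    simpa [Fin.last] using G.orderEmbOfFin_last hcard d.succ_pos
  rw [← he0, ← hel]
  refine GS.skipped N d (fun i => Fk (e i)) (fun i => σk (e i)) (fun i => mins (e i))
    (fun i => maxs (e i)) σ U (fun i => hGS _ (hpos i))
    (fun i j hij => hdisj _ _ (hpos i) (hpos j) (e.injective.ne hij))
    (fun i => hσ _ (hpos i)) ?_
    (fun i j hij => hw (hpos i) (hpos j) (e.strictMono hij))
    (fun i => hlt _ (hpos i)) ((Nat.cast_le.mpr (hcard_le 0)).trans (hwk _)) fun x => ?_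
  · exact (Nat.cast_pos.mpr (hpos 0)).trans_le (hwk _)
  · rw [hU x]
    constructor
    · rintro ⟨k, hk, hxk⟩
      obtain ⟨i, rfl⟩ : k ∈ Set.range e := by rwa [Finset.range_orderEmbOfFin]
      exact ⟨i, hxk⟩
    · rintro ⟨i, hxi⟩
      exact ⟨e i, he i, hxi⟩

theorem GS_attached_of_mem_schreier_succ {N m : ℕ} {σ : Cantor} {w : ℕ → ℕ∞}
    (hw : StrictMonoOn w (Set.Ici 1)) (hwk : ∀ k : ℕ, (k : ℕ∞) ≤ w k)
    (ih : ∀ H ∈ Schreier (m + 1), ∀ hH : H.Nonempty, ∀ V : Finset Cantor,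
      (∀ x, x ∈ V ↔ ∃ k ∈ H, x ∈ Fk k) → GS N V σ (w (H.min' hH)) (w (H.max' hH)))
    {G : Finset ℕ} (hG : G ∈ Schreier (m + 2)) (hGne : G.Nonempty)
    {U : Finset Cantor} (hU : ∀ x, x ∈ U ↔ ∃ k ∈ G, x ∈ Fk k) :
    GS (N + 1) U σ (w (G.min' hGne)) (w (G.max' hGne)) := by
  classical
  obtain rfl | ⟨d, Gs, hGs, hord, hd, hmem⟩ := hG
  · exact absurd rfl hGne.ne_empty
  have hne : ∀ i, (Gs i).Nonempty := fun i => (hGs i).2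
  have hpos : ∀ i, ∀ k ∈ Gs i, 1 ≤ k := fun i _ hk => one_le_of_mem_schreier (hGs i).1 hk
  have hUi : ∀ i x, x ∈ (Gs i).biUnion Fk ↔ ∃ k ∈ Gs i, x ∈ Fk k := fun _ _ =>
    Finset.mem_biUnion
  rw [min'_eq_min'_first_block hmem hne hord, max'_eq_max'_last_block hmem hne hord]
  refine GS.attached N d (fun i => (Gs i).biUnion Fk) (fun i => w ((Gs i).min' (hne i)))
    (fun i => w ((Gs i).max' (hne i))) σ U
    (fun i => ih _ (hGs i).1 (hne i) _ (hUi i)) ?_ (fun i => ?_) ?_ fun x => ?_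
  · intro i j hij x hxi hxj
    obtain ⟨a, ha, hxa⟩ := (hUi i x).mp hxi
    obtain ⟨b, hb, hxb⟩ := (hUi j x).mp hxj
    have hab : a ≠ b := by
      rcases hij.lt_or_gt with h | h
      · exact (lt_of_mem_block_of_mem_block hne hord h ha hb).ne
      · exact (lt_of_mem_block_of_mem_block hne hord h hb ha).ne'
    exact hdisj a b (hpos i a ha) (hpos j b hb) hab x hxa hxb
  · exact hw (hpos _ _ ((Gs _).max'_mem _)) (hpos _ _ ((Gs _).min'_mem _))
      (lt_of_mem_block_of_mem_block hne hord Fin.castSucc_lt_succ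
        ((Gs _).max'_mem _) ((Gs _).min'_mem _))
  · exact (Nat.cast_le.mpr (hd _ ((Gs 0).min'_mem _))).trans (hwk _)
  · rw [hU x]
    constructor
    · rintro ⟨k, hk, hxk⟩
      obtain ⟨i, hi⟩ := (hmem k).mp hk
      exact ⟨i, (hUi i x).mpr ⟨k, hi, hxk⟩⟩
    · rintro ⟨i, hxi⟩
      obtain ⟨k, hk, hxk⟩ := (hUi i x).mp hxi
      exact ⟨k, (hmem k).mpr ⟨i, hk⟩, hxk⟩

end Branching

theorem GS_skipped_schreier_union_general (n₀ : ℕ) (σ : Cantor)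
    (Fk : ℕ → Finset Cantor) (σk : ℕ → Cantor) (mins maxs : ℕ → ℕ∞)
    (hGS : ∀ k, 1 ≤ k → GS n₀ (Fk k) (σk k) (mins k) (maxs k))
    (hdisj : ∀ k l, 1 ≤ k → 1 ≤ l → k ≠ l → ∀ x, x ∈ Fk k → x ∉ Fk l)
    (hσ : ∀ k, 1 ≤ k → σ ≠ σk k)
    (h0 : 0 < wedgeLen σ (σk 1))
    (hmono : ∀ k, 1 ≤ k → wedgeLen σ (σk k) < wedgeLen σ (σk (k + 1)))
    (hlt : ∀ k, 1 ≤ k → wedgeLen σ (σk k) < mins k) :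
    ∀ n : ℕ, 1 ≤ n → ∀ G ∈ Schreier n, ∀ hG : G.Nonempty,
      ∀ U : Finset Cantor, (∀ x, x ∈ U ↔ ∃ k ∈ G, x ∈ Fk k) →
        GS (n₀ + n) U σ (wedgeLen σ (σk (G.min' hG)))
          (wedgeLen σ (σk (G.max' hG))) := by
  have hw : StrictMonoOn (fun k => wedgeLen σ (σk k)) (Set.Ici 1) :=
    strictMonoOn_of_lt_add_one Set.ordConnected_Ici fun k _ hk _ => hmono k hk
  have hwk := natCast_le_of_strictMonoOn_Ici_one hw h0
  intro n hn
  induction n, hn using Nat.le_induction with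
  | base => exact fun G hG hGne U hU =>
      GS_skipped_of_mem_schreier_one hdisj hGS hσ hw hwk hlt hG hGne hU
  | succ n hn ih =>
    obtain ⟨m, rfl⟩ := Nat.exists_eq_add_of_le' hn
    exact fun G hG hGne U hU => GS_attached_of_mem_schreier_succ hdisj hw hwk ih hG hGne hU

theorem GS_skipped_schreier_union (n₀ : ℕ) (hn₀ : 1 ≤ n₀) (σ : Cantor)
    (Fk : ℕ → Finset Cantor) (σk : ℕ → Cantor) (mins maxs : ℕ → ℕ∞)
    (hGS : ∀ k, 1 ≤ k → GS n₀ (Fk k) (σk k) (mins k) (maxs k))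
    (hdisj : ∀ k l, 1 ≤ k → 1 ≤ l → k ≠ l → ∀ x, x ∈ Fk k → x ∉ Fk l)
    (hσ : ∀ k, 1 ≤ k → σ ≠ σk k)
    (h0 : 0 < wedgeLen σ (σk 1))
    (hmono : ∀ k, 1 ≤ k → wedgeLen σ (σk k) < wedgeLen σ (σk (k + 1)))
    (hlt : ∀ k, 1 ≤ k → wedgeLen σ (σk k) < mins k) :
    ∀ n : ℕ, 1 ≤ n → ∀ G ∈ Schreier n, ∀ hG : G.Nonempty,
      ∀ U : Finset Cantor, (∀ x, x ∈ U ↔ ∃ k ∈ G, x ∈ Fk k) →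
        GS (n₀ + n) U σ (wedgeLen σ (σk (G.min' hG)))
          (wedgeLen σ (σk (G.max' hG))) :=
  GS_skipped_schreier_union_general n₀ σ Fk σk mins maxs hGS hdisj hσ h0 hmono hlt
end
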